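/- Let (A, α) be a unital commutative imprimitive Kreĭn C*-algebra with fundamental symmetry α and let ε be an odd symmetry compatible with α. Let Ω(A, α, ε) denote the space of even characters on (A, α), equipped with the topology of pointwise convergence (it is a compact Hausdorff space). Then the Gel'fand transform φ : A → C(Ω(A, α, ε), 𝕂), defined by φ(a)(w) := w(a) for a ∈ A and w ∈ Ω(A, α, ε), is a bijective unital ℂ-linear multiplicative map satisfying φ(a*) = φ(a)* (where the involution on C(Ω(A, α, ε), 𝕂) is pointwise) and ‖φ(a)‖ = ‖a‖ for all a ∈ A (with the supremum norm on C(Ω(A, α, ε), 𝕂)); i.e. φ is an isometric *-isomorphism. -/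

import Mathlib

noncomputable section

open scoped Matrix.Norms.L2Operator

/-- Membership in the Kreĭn C*-algebra `𝕂` of matrices `T_{a,b} = !![a, b; b, a]`. -/
def Kmem (M : Matrix (Fin 2) (Fin 2) ℂ) : Prop :=
  M 0 0 = M 1 1 ∧ M 0 1 = M 1 0

/-- The involution of `𝕂`: `T_{a,b}* = T_{conj a, -conj b}`. -/
noncomputable def Kst (M : Matrix (Fin 2) (Fin 2) ℂ) : Matrix (Fin 2) (Fin 2) ℂ :=
  Matrix.of fun i j => if i = j then starRingEnd ℂ (M i j) else -starRingEnd ℂ (M i j)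

/-- The fundamental symmetry of `𝕂`: `γ (T_{a,b}) = T_{a,-b}`. -/
def Kgamma (M : Matrix (Fin 2) (Fin 2) ℂ) : Matrix (Fin 2) (Fin 2) ℂ :=
  Matrix.of fun i j => if i = j then M i j else -M i j

/-- The odd symmetry of `𝕂`: `ε (T_{a,b}) = T_{b,a}`. -/
def Keps (M : Matrix (Fin 2) (Fin 2) ℂ) : Matrix (Fin 2) (Fin 2) ℂ :=
  Matrix.of fun i j => M i (j + 1)

/-- A character on a Kreĭn C*-algebra `(A, α)`: a unital ℂ-linear multiplicative map
`w : A → 𝕂` with `w (star x) = (w x)*` and `w ∘ α = γ ∘ w`. -/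
def IsKChar {A : Type*} [NormedRing A] [NormedAlgebra ℂ A] [StarRing A]
    (α : A → A) (w : A → Matrix (Fin 2) (Fin 2) ℂ) : Prop :=
  (∀ x, Kmem (w x)) ∧
  (∀ x y, w (x + y) = w x + w y) ∧
  (∀ (c : ℂ) (x : A), w (c • x) = c • w x) ∧
  (∀ x y, w (x * y) = w x * w y) ∧
  w 1 = 1 ∧
  (∀ x, w (star x) = Kst (w x)) ∧
  (∀ x, w (α x) = Kgamma (w x))

/-- `(A, α)` is imprimitive (full): the norm-closure of the linear span of the products of
odd elements is the whole even part. -/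
def Imprimitive {A : Type*} [NormedRing A] [NormedAlgebra ℂ A]
    (α : A → A) : Prop :=
  closure ((Submodule.span ℂ {z : A | ∃ x y, α x = -x ∧ α y = -y ∧ z = x * y} :
      Submodule ℂ A) : Set A)
    = {x : A | α x = x}

/-- A character `w` is even (w.r.t. the odd symmetry `ε`) if `ε_𝕂 ∘ w ∘ ε = w`. -/
def IsEven {A : Type*} (ε : A → A) (w : A → Matrix (Fin 2) (Fin 2) ℂ) : Prop :=
  ∀ x, Keps (w (ε x)) = w x

/-! With the involution `x ↦ α (star x)`, `A` is a commutative C*-algebra `B`. The matrix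
`T_{a,b}` has eigenvalues `a + b` and `a - b` on the common eigenvectors `(1, 1)` and `(1, -1)`,
so a `𝕂`-character `w` is the same thing as a character `χ = (x ↦ w x 0 0 + w x 0 1)` of `B`,
the other eigenvalue of `w x` being `χ (α x)`. Since `ε` is multiplication by `u = ε 1` with
`u * u = 1` and `α u = -u`, every character of `B` takes the value `±1` at `u`, `χ ↦ χ ∘ α`
swaps the two signs, and `w` is even exactly when `χ u = 1`. Hence every character of `B` is one
of the two eigenvalues of some even `𝕂`-character, and injectivity, surjectivity and the
isometry property follow from Gel'fand duality for `B` together with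
`‖T_{a,b}‖ = max ‖a + b‖ ‖a - b‖`. -/

/-- The element `T_{a,b}` of `𝕂`. -/
def kmat (a b : ℂ) : Matrix (Fin 2) (Fin 2) ℂ := !![a, b; b, a]

lemma kmat_mem (a b : ℂ) : Kmem (kmat a b) := ⟨rfl, rfl⟩

lemma Kmem.eq_kmat {M : Matrix (Fin 2) (Fin 2) ℂ} (h : Kmem M) : M = kmat (M 0 0) (M 0 1) := by
  ext i j; fin_cases i <;> fin_cases j <;> simp [kmat, h.1, h.2]

lemma kmat_inj {a b c d : ℂ} : kmat a b = kmat c d ↔ a = c ∧ b = d :=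
  ⟨fun h => ⟨congrFun (congrFun h 0) 0, congrFun (congrFun h 0) 1⟩, by rintro ⟨rfl, rfl⟩; rfl⟩

lemma kmat_add (a b c d : ℂ) : kmat a b + kmat c d = kmat (a + c) (b + d) := by
  ext i j; fin_cases i <;> fin_cases j <;> simp [kmat]

lemma smul_kmat (c a b : ℂ) : c • kmat a b = kmat (c * a) (c * b) := by
  ext i j; fin_cases i <;> fin_cases j <;> simp [kmat]

lemma kmat_mul (a b c d : ℂ) : kmat a b * kmat c d = kmat (a * c + b * d) (a * d + b * c) := by
  ext i j; fin_cases i <;> fin_cases j <;> simp [kmat] <;> ring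

lemma kmat_one_zero : kmat 1 0 = 1 := by
  ext i j; fin_cases i <;> fin_cases j <;> simp [kmat]

lemma Kst_kmat (a b : ℂ) : Kst (kmat a b) = kmat (starRingEnd ℂ a) (-starRingEnd ℂ b) := by
  ext i j; fin_cases i <;> fin_cases j <;> simp [kmat, Kst]

lemma Kgamma_kmat (a b : ℂ) : Kgamma (kmat a b) = kmat a (-b) := by
  ext i j; fin_cases i <;> fin_cases j <;> simp [kmat, Kgamma]

lemma Keps_kmat (a b : ℂ) : Keps (kmat a b) = kmat b a := by
  ext i j; fin_cases i <;> fin_cases j <;> rfl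

lemma norm_kmat (a b : ℂ) : ‖kmat a b‖ = max ‖a + b‖ ‖a - b‖ := by
  set W : Matrix (Fin 2) (Fin 2) ℂ := !![1, 1; 1, -1]
  set U : Matrix (Fin 2) (Fin 2) ℂ := (Real.sqrt 2)⁻¹ • W
  have hc : (Real.sqrt 2)⁻¹ * (Real.sqrt 2)⁻¹ = 1 / 2 := by
    rw [← mul_inv, Real.mul_self_sqrt zero_le_two]; norm_num
  have hW : star W = W := by
    ext i j; fin_cases i <;> fin_cases j <;> simp [W]
  have hU : U ∈ unitary (Matrix (Fin 2) (Fin 2) ℂ) := by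
    rw [Matrix.mem_unitaryGroup_iff, star_smul, star_trivial, hW, smul_mul_smul_comm, hc]
    ext i j; fin_cases i <;> fin_cases j <;> simp [W] <;> norm_num
  have hdiag : kmat a b = U * Matrix.diagonal ![a + b, a - b] * U := by
    rw [smul_mul_assoc, smul_mul_assoc, mul_smul_comm, smul_smul, hc, Matrix.diagonal_vec2]
    ext i j; fin_cases i <;> fin_cases j <;> simp [W, kmat] <;> ring
  rw [hdiag, CStarRing.norm_mul_mem_unitary _ hU, CStarRing.norm_mem_unitary_mul _ hU,
    Matrix.l2_opNorm_diagonal]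
  simp [Pi.norm_def, Fin.univ_succ]

lemma norm_add_mul_le_norm_kmat {s : ℂ} (hs : s = 1 ∨ s = -1) (a b : ℂ) :
    ‖a + s * b‖ ≤ ‖kmat a b‖ := by
  rw [norm_kmat]
  rcases hs with rfl | rfl
  · simp
  · simp [← sub_eq_add_neg]

lemma continuous_kmat {X : Type*} [TopologicalSpace X] {f g : X → ℂ} (hf : Continuous f)
    (hg : Continuous g) : Continuous fun x => kmat (f x) (g x) := by
  refine continuous_matrix fun i j => ?_
  fin_cases i <;> fin_cases j <;> simp [kmat, hf, hg]

section IsKChar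

variable {A : Type*} [NormedRing A] [NormedAlgebra ℂ A] [StarRing A] {α : A → A}
  {w : A → Matrix (Fin 2) (Fin 2) ℂ}

lemma IsKChar.mem (hw : IsKChar α w) (x : A) : Kmem (w x) := hw.1 x

lemma IsKChar.map_add (hw : IsKChar α w) (x y : A) : w (x + y) = w x + w y := hw.2.1 x y

lemma IsKChar.map_smul (hw : IsKChar α w) (c : ℂ) (x : A) : w (c • x) = c • w x := hw.2.2.1 c x

lemma IsKChar.map_mul (hw : IsKChar α w) (x y : A) : w (x * y) = w x * w y := hw.2.2.2.1 x y

lemma IsKChar.map_one (hw : IsKChar α w) : w 1 = 1 := hw.2.2.2.2.1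

lemma IsKChar.map_star (hw : IsKChar α w) (x : A) : w (star x) = Kst (w x) := hw.2.2.2.2.2.1 x

lemma IsKChar.apply_map (hw : IsKChar α w) (x : A) : w (α x) = Kgamma (w x) := hw.2.2.2.2.2.2 x

lemma IsKChar.apply_eq_kmat (hw : IsKChar α w) (x : A) : w x = kmat (w x 0 0) (w x 0 1) :=
  (hw.mem x).eq_kmat

/-- The eigenvalue of `w x` on the eigenvector `(1, 1)`. -/
def IsKChar.toAlgHom (hw : IsKChar α w) : A →ₐ[ℂ] ℂ where
  toFun x := w x 0 0 + w x 0 1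
  map_one' := by simp [hw.map_one]
  map_mul' x y := by
    rw [hw.map_mul, hw.apply_eq_kmat x, hw.apply_eq_kmat y, kmat_mul]
    simp [kmat]
    ring
  map_zero' := by simp [by simpa using hw.map_smul 0 0]
  map_add' x y := by simp only [hw.map_add, Matrix.add_apply]; ring
  commutes' c := by simp [Algebra.algebraMap_eq_smul_one, hw.map_smul, hw.map_one]

lemma IsKChar.toAlgHom_apply (hw : IsKChar α w) (x : A) :
    hw.toAlgHom x = w x 0 0 + w x 0 1 := rfl

lemma IsKChar.toAlgHom_apply_map (hw : IsKChar α w) (x : A) :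
    hw.toAlgHom (α x) = w x 0 0 - w x 0 1 := by
  simp [hw.toAlgHom_apply, hw.apply_map, Kgamma, sub_eq_add_neg]

lemma IsKChar.norm_apply (hw : IsKChar α w) (x : A) :
    ‖w x‖ = max ‖hw.toAlgHom x‖ ‖hw.toAlgHom (α x)‖ := by
  rw [hw.toAlgHom_apply, hw.toAlgHom_apply_map, ← norm_kmat, ← hw.apply_eq_kmat x]

lemma IsKChar.toAlgHom_apply_one {ε : A → A} (hw : IsKChar α w) (hev : IsEven ε w) :
    hw.toAlgHom (ε 1) = 1 := by
  have h := hev 1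
  rw [hw.map_one, hw.apply_eq_kmat (ε 1), Keps_kmat, ← kmat_one_zero, kmat_inj] at h
  rw [hw.toAlgHom_apply, h.1, h.2, zero_add]

end IsKChar

structure IsMulOddInvolution {A : Type*} [Ring A] (α ε : A → A) : Prop where
  apply_eq_mul : ∀ x, ε x = ε 1 * x
  mul_self : ε 1 * ε 1 = 1
  map_apply_one : α (ε 1) = -ε 1

lemma isMulOddInvolution_of_apply_mul {A : Type*} [Ring A] {α ε : A → A} (hα1 : α 1 = 1)
    (hinv : ∀ x, ε (ε x) = x) (hmul : ∀ x y, ε (x * y) = ε x * y)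
    (hodd : ∀ x, ε (α x) = -α (ε x)) : IsMulOddInvolution α ε where
  apply_eq_mul x := by simpa using hmul 1 x
  mul_self := by simpa [hinv] using (hmul 1 (ε 1)).symm
  map_apply_one := by simpa [hα1, eq_neg_iff_add_eq_zero, add_comm] using hodd 1

section Ring

variable {A : Type*} [Ring A] [Algebra ℂ A] {α ε : A → A}

lemma IsMulOddInvolution.apply_one_mul_self (hε : IsMulOddInvolution α ε) (φ : A →ₐ[ℂ] ℂ) :
    φ (ε 1) * φ (ε 1) = 1 := by
  rw [← map_mul, hε.mul_self, map_one]

lemma IsMulOddInvolution.apply_one_eq_one_or (hε : IsMulOddInvolution α ε) (φ : A →ₐ[ℂ] ℂ) :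
    φ (ε 1) = 1 ∨ φ (ε 1) = -1 :=
  mul_self_eq_one_iff.mp (hε.apply_one_mul_self φ)

/-- The matrix with eigenvalues `φ x` and `φ (α x)`, in the order given by the sign
`φ (ε 1) = ±1`; this order makes it invariant under `φ ↦ φ ∘ α`. -/
def kcharOf (α ε : A → A) (φ : A →ₐ[ℂ] ℂ) (x : A) : Matrix (Fin 2) (Fin 2) ℂ :=
  kmat ((φ x + φ (α x)) / 2) (φ (ε 1) * ((φ x - φ (α x)) / 2))

lemma apply_eq_kcharOf (hε : IsMulOddInvolution α ε) (φ : A →ₐ[ℂ] ℂ) (x : A) :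
    φ x = kcharOf α ε φ x 0 0 + φ (ε 1) * kcharOf α ε φ x 0 1 := by
  simp only [kcharOf, kmat, Matrix.of_apply, Matrix.cons_val', Matrix.cons_val_zero,
    Matrix.cons_val_one, Matrix.empty_val', Matrix.cons_val_fin_one]
  linear_combination (-(φ x - φ (α x)) / 2) * hε.apply_one_mul_self φ

lemma norm_apply_le_norm_kcharOf (hε : IsMulOddInvolution α ε) (φ : A →ₐ[ℂ] ℂ) (x : A) :
    ‖φ x‖ ≤ ‖kcharOf α ε φ x‖ := by
  rw [apply_eq_kcharOf hε φ x]
  exact norm_add_mul_le_norm_kmat (hε.apply_one_eq_one_or φ) _ _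

end Ring

structure IsFundamentalSymmetry {A : Type*} [NormedRing A] [NormedAlgebra ℂ A] [StarRing A]
    (α : A → A) : Prop where
  map_add : ∀ x y, α (x + y) = α x + α y
  map_smul : ∀ (c : ℂ) x, α (c • x) = c • α x
  map_mul : ∀ x y, α (x * y) = α x * α y
  map_star : ∀ x, α (star x) = star (α x)
  involutive : ∀ x, α (α x) = x
  norm_map_star_mul_self : ∀ x, ‖α (star x) * x‖ = ‖x‖ ^ 2

section IsFundamentalSymmetry

variable {A : Type*} [NormedRing A] [NormedAlgebra ℂ A] [StarRing A] {α ε : A → A}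

lemma IsFundamentalSymmetry.map_one (hα : IsFundamentalSymmetry α) : α 1 = 1 := by
  simpa [hα.involutive] using (hα.map_mul 1 (α 1)).symm

def IsFundamentalSymmetry.toAlgHom (hα : IsFundamentalSymmetry α) : A →ₐ[ℂ] A where
  toFun := α
  map_one' := hα.map_one
  map_mul' := hα.map_mul
  map_zero' := by simpa using hα.map_smul 0 0
  map_add' := hα.map_add
  commutes' c := by simp [Algebra.algebraMap_eq_smul_one, hα.map_smul, hα.map_one]

lemma IsFundamentalSymmetry.toAlgHom_apply (hα : IsFundamentalSymmetry α) (x : A) :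
    hα.toAlgHom x = α x := rfl

lemma isKChar_kcharOf (hα : IsFundamentalSymmetry α) (hε : IsMulOddInvolution α ε)
    {φ : A →ₐ[ℂ] ℂ} (hφ : ∀ x, φ (α (star x)) = starRingEnd ℂ (φ x)) :
    IsKChar α (kcharOf α ε φ) := by
  have hs_real : starRingEnd ℂ (φ (ε 1)) = φ (ε 1) := by
    rcases hε.apply_one_eq_one_or φ with h | h <;> simp [h]
  have hφ' : ∀ x, φ (star x) = starRingEnd ℂ (φ (α x)) := fun x => by
    rw [← hφ, hα.map_star, hα.involutive]
  refine ⟨fun x => kmat_mem _ _, fun x y => ?_, fun c x => ?_, fun x y => ?_, ?_,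
    fun x => ?_, fun x => ?_⟩
  · simp only [kcharOf, kmat_add, hα.map_add, map_add]
    congr 1 <;> ring
  · simp only [kcharOf, smul_kmat, hα.map_smul, map_smul, smul_eq_mul]
    congr 1 <;> ring
  · simp only [kcharOf, kmat_mul, hα.map_mul, map_mul]
    congr 1
    · linear_combination -(φ x - φ (α x)) * (φ y - φ (α y)) / 4 * hε.apply_one_mul_self φ
    · ring
  · simp [kcharOf, hα.map_one, ← kmat_one_zero]
  · simp only [kcharOf, Kst_kmat, hφ', hφ, map_div₀, map_add, map_sub, map_mul, hs_real,
      map_ofNat]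
    congr 1 <;> ring
  · simp only [kcharOf, Kgamma_kmat, hα.involutive]
    congr 1 <;> ring

lemma isEven_kcharOf (hα : IsFundamentalSymmetry α) (hε : IsMulOddInvolution α ε)
    (φ : A →ₐ[ℂ] ℂ) : IsEven ε (kcharOf α ε φ) := by
  intro x
  simp only [kcharOf, Keps_kmat, hε.apply_eq_mul x, hα.map_mul, hε.map_apply_one, map_mul,
    map_neg, neg_mul]
  congr 1
  · linear_combination (φ x + φ (α x)) / 2 * hε.apply_one_mul_self φ
  · ring

lemma kcharOf_comp_toAlgHom (hα : IsFundamentalSymmetry α) (hε : IsMulOddInvolution α ε)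
    (φ : A →ₐ[ℂ] ℂ) : kcharOf α ε (φ.comp hα.toAlgHom) = kcharOf α ε φ := by
  funext x
  simp only [kcharOf, AlgHom.comp_apply, hα.toAlgHom_apply, hα.involutive, hε.map_apply_one,
    map_neg]
  congr 1 <;> ring

lemma kcharOf_toAlgHom {w : A → Matrix (Fin 2) (Fin 2) ℂ} (hw : IsKChar α w)
    (hev : IsEven ε w) : kcharOf α ε hw.toAlgHom = w := by
  funext x
  conv_rhs => rw [hw.apply_eq_kmat x]
  rw [kcharOf, hw.toAlgHom_apply_one hev, hw.toAlgHom_apply, hw.toAlgHom_apply_map]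
  congr 1 <;> ring

end IsFundamentalSymmetry

/-- `A` as a C*-algebra with the involution `x ↦ α (star x)`. That involution depends on the
hypotheses `IsFundamentalSymmetry α`, so the C*-algebra structure is not a global instance: it is
`IsFundamentalSymmetry.cstarAlgebra`, installed locally where needed. -/
def FundamentalCStar (A : Type*) (_α : A → A) : Type _ := A

namespace FundamentalCStar

variable {A : Type*} [NormedRing A] [NormedAlgebra ℂ A] (α : A → A)

instance : NormedRing (FundamentalCStar A α) := inferInstanceAs (NormedRing A)

instance : NormedAlgebra ℂ (FundamentalCStar A α) := inferInstanceAs (NormedAlgebra ℂ A)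

instance [CompleteSpace A] : CompleteSpace (FundamentalCStar A α) :=
  inferInstanceAs (CompleteSpace A)

def charEquiv [CompleteSpace A] :
    WeakDual.characterSpace ℂ (FundamentalCStar A α) ≃ (A →ₐ[ℂ] ℂ) :=
  WeakDual.CharacterSpace.equivAlgHom

lemma continuous_charEquiv_apply [CompleteSpace A] (x : A) :
    Continuous fun χ => charEquiv α χ x :=
  (WeakDual.eval_continuous (𝕜 := ℂ) (E := FundamentalCStar A α) x).comp continuous_subtype_val

end FundamentalCStar

namespace IsFundamentalSymmetry

open FundamentalCStar

variable {A : Type*} [NormedRing A] [NormedAlgebra ℂ A] [StarRing A] [StarModule ℂ A]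
  [CompleteSpace A] {α : A → A}

abbrev cstarAlgebra (hα : IsFundamentalSymmetry α) : CStarAlgebra (FundamentalCStar A α) where
  star x := α (star (x : A))
  star_involutive (x : A) := by
    change α (star (α (star x))) = x
    rw [← hα.map_star, star_star, hα.involutive]
  star_mul (x y : A) := by
    change α (star (x * y)) = α (star y) * α (star x)
    rw [star_mul, hα.map_mul]
  star_add (x y : A) := by
    change α (star (x + y)) = α (star x) + α (star y)
    rw [star_add, hα.map_add]
  norm_mul_self_le (x : A) := ((hα.norm_map_star_mul_self x).trans (sq _)).ge
  star_smul c (x : A) := by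
    change α (star (c • x)) = starRingEnd ℂ c • α (star x)
    rw [star_smul, hα.map_smul]; rfl

abbrev commCStarAlgebra (hα : IsFundamentalSymmetry α) (hcomm : ∀ x y : A, x * y = y * x) :
    CommCStarAlgebra (FundamentalCStar A α) :=
  { hα.cstarAlgebra with mul_comm := hcomm }

lemma algHom_apply_map_star (hα : IsFundamentalSymmetry α) (φ : A →ₐ[ℂ] ℂ) (x : A) :
    φ (α (star x)) = starRingEnd ℂ (φ x) :=
  let _ := hα.cstarAlgebra
  StarHomClass.map_star ((charEquiv α).symm φ) x

lemma eq_of_forall_algHom_apply_eq (hα : IsFundamentalSymmetry α)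
    (hcomm : ∀ x y : A, x * y = y * x) {a b : A} (h : ∀ φ : A →ₐ[ℂ] ℂ, φ a = φ b) : a = b :=
  let _ := hα.commCStarAlgebra hcomm
  (gelfandTransform_bijective (FundamentalCStar A α)).1
    (ContinuousMap.ext fun χ => h (charEquiv α χ))

lemma exists_forall_charEquiv_apply_eq (hα : IsFundamentalSymmetry α)
    (hcomm : ∀ x y : A, x * y = y * x) (g : WeakDual.characterSpace ℂ (FundamentalCStar A α) → ℂ)
    (hg : Continuous g) : ∃ a : A, ∀ χ, charEquiv α χ a = g χ :=
  let _ := hα.commCStarAlgebra hcomm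
  let ⟨a, ha⟩ := (gelfandTransform_bijective (FundamentalCStar A α)).2 ⟨g, hg⟩
  ⟨a, fun χ => ContinuousMap.congr_fun ha χ⟩

lemma norm_le_iff_forall_algHom (hα : IsFundamentalSymmetry α)
    (hcomm : ∀ x y : A, x * y = y * x) {a : A} {C : ℝ} (hC : 0 ≤ C) :
    ‖a‖ ≤ C ↔ ∀ φ : A →ₐ[ℂ] ℂ, ‖φ a‖ ≤ C := by
  let _ := hα.commCStarAlgebra hcomm
  have h := (gelfandTransform_isometry (FundamentalCStar A α)).norm_map_of_map_zero (map_zero _) a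
  have h' := ContinuousMap.norm_le (WeakDual.gelfandTransform ℂ (FundamentalCStar A α) a) hC
  rw [h] at h'
  exact h'.trans ((charEquiv α).forall_congr_right (q := fun φ => ‖φ a‖ ≤ C))

lemma norm_algHom_apply_le (hα : IsFundamentalSymmetry α) (hcomm : ∀ x y : A, x * y = y * x)
    (φ : A →ₐ[ℂ] ℂ) (a : A) : ‖φ a‖ ≤ ‖a‖ :=
  (hα.norm_le_iff_forall_algHom hcomm (norm_nonneg a)).1 le_rfl φ

end IsFundamentalSymmetry

abbrev EvenKChar {A : Type*} [NormedRing A] [NormedAlgebra ℂ A] [StarRing A] (α ε : A → A) :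
    Type _ :=
  {w : A → Matrix (Fin 2) (Fin 2) ℂ // IsKChar α w ∧ IsEven ε w}

namespace EvenKChar

variable {A : Type*} [NormedRing A] [NormedAlgebra ℂ A] [StarRing A] [StarModule ℂ A]
  [CompleteSpace A] {α ε : A → A}

def ofAlgHom (hα : IsFundamentalSymmetry α) (hε : IsMulOddInvolution α ε) (φ : A →ₐ[ℂ] ℂ) :
    EvenKChar α ε :=
  ⟨kcharOf α ε φ, isKChar_kcharOf hα hε (hα.algHom_apply_map_star φ), isEven_kcharOf hα hε φ⟩

lemma ofAlgHom_toAlgHom (hα : IsFundamentalSymmetry α) (hε : IsMulOddInvolution α ε)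
    (w : EvenKChar α ε) : ofAlgHom hα hε w.2.1.toAlgHom = w :=
  Subtype.ext (kcharOf_toAlgHom w.2.1 w.2.2)

lemma ofAlgHom_toAlgHom_comp (hα : IsFundamentalSymmetry α) (hε : IsMulOddInvolution α ε)
    (w : EvenKChar α ε) : ofAlgHom hα hε (w.2.1.toAlgHom.comp hα.toAlgHom) = w :=
  Subtype.ext ((kcharOf_comp_toAlgHom hα hε _).trans (kcharOf_toAlgHom w.2.1 w.2.2))

lemma continuous_ofAlgHom_charEquiv (hα : IsFundamentalSymmetry α)
    (hε : IsMulOddInvolution α ε) :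
    Continuous fun χ => ofAlgHom hα hε (FundamentalCStar.charEquiv α χ) := by
  have h := FundamentalCStar.continuous_charEquiv_apply α
  refine continuous_induced_rng.2 (continuous_pi fun x => continuous_kmat ?_ ?_)
  · exact ((h x).add (h (α x))).div_const 2
  · exact (h (ε 1)).mul (((h x).sub (h (α x))).div_const 2)

lemma norm_apply_le (hα : IsFundamentalSymmetry α) (hcomm : ∀ x y : A, x * y = y * x)
    (w : EvenKChar α ε) (a : A) : ‖w.1 a‖ ≤ ‖a‖ := by
  rw [w.2.1.norm_apply]
  exact max_le (hα.norm_algHom_apply_le hcomm _ a)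
    (hα.norm_algHom_apply_le hcomm (w.2.1.toAlgHom.comp hα.toAlgHom) a)

lemma eq_of_forall_apply_eq (hα : IsFundamentalSymmetry α) (hcomm : ∀ x y : A, x * y = y * x)
    (hε : IsMulOddInvolution α ε) {a b : A} (h : ∀ w : EvenKChar α ε, w.1 a = w.1 b) : a = b :=
  hα.eq_of_forall_algHom_apply_eq hcomm fun φ => by
    have hab : kcharOf α ε φ a = kcharOf α ε φ b := h (ofAlgHom hα hε φ)
    rw [apply_eq_kcharOf hε φ a, apply_eq_kcharOf hε φ b, hab]

lemma exists_forall_apply_eq (hα : IsFundamentalSymmetry α) (hcomm : ∀ x y : A, x * y = y * x)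
    (hε : IsMulOddInvolution α ε) (f : EvenKChar α ε → Matrix (Fin 2) (Fin 2) ℂ)
    (hf : Continuous f) (hfK : ∀ w, Kmem (f w)) : ∃ a : A, ∀ w : EvenKChar α ε, w.1 a = f w := by
  have hc := hf.comp (continuous_ofAlgHom_charEquiv hα hε)
  obtain ⟨a, ha⟩ := hα.exists_forall_charEquiv_apply_eq hcomm _
    ((hc.matrix_elem 0 0).add
      ((FundamentalCStar.continuous_charEquiv_apply α (ε 1)).mul (hc.matrix_elem 0 1)))
  replace ha : ∀ φ : A →ₐ[ℂ] ℂ,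
      φ a = f (ofAlgHom hα hε φ) 0 0 + φ (ε 1) * f (ofAlgHom hα hε φ) 0 1 :=
    (FundamentalCStar.charEquiv α).forall_congr_right.1 ha
  refine ⟨a, fun w => ?_⟩
  -- evaluate at the two characters `χ`, `χ ∘ α` attached to `w`, where `χ (ε 1) = 1`
  have h₁ := ha w.2.1.toAlgHom
  have h₂ := ha (w.2.1.toAlgHom.comp hα.toAlgHom)
  rw [ofAlgHom_toAlgHom, w.2.1.toAlgHom_apply_one w.2.2, w.2.1.toAlgHom_apply] at h₁
  rw [ofAlgHom_toAlgHom_comp, AlgHom.comp_apply, AlgHom.comp_apply, hα.toAlgHom_apply,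
    hα.toAlgHom_apply, w.2.1.toAlgHom_apply_map, hε.map_apply_one, map_neg,
    w.2.1.toAlgHom_apply_one w.2.2] at h₂
  rw [w.2.1.apply_eq_kmat a, (hfK w).eq_kmat, kmat_inj]
  constructor
  · linear_combination (h₁ + h₂) / 2
  · linear_combination (h₁ - h₂) / 2

lemma iSup_norm_apply (hα : IsFundamentalSymmetry α) (hcomm : ∀ x y : A, x * y = y * x)
    (hε : IsMulOddInvolution α ε) (a : A) : ⨆ w : EvenKChar α ε, ‖w.1 a‖ = ‖a‖ := by
  refine le_antisymm (Real.iSup_le (fun w => norm_apply_le hα hcomm w a) (norm_nonneg a)) ?_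
  refine (hα.norm_le_iff_forall_algHom hcomm (Real.iSup_nonneg fun _ => norm_nonneg _)).2
    fun φ => ?_
  have hbdd : BddAbove (Set.range fun w : EvenKChar α ε => ‖w.1 a‖) :=
    ⟨‖a‖, Set.forall_mem_range.2 fun w => norm_apply_le hα hcomm w a⟩
  exact (norm_apply_le_norm_kcharOf hε φ a).trans (le_ciSup hbdd (ofAlgHom hα hε φ))

end EvenKChar

theorem krein_gelfand_spectral_theorem_general {A : Type*} [NormedRing A] [NormedAlgebra ℂ A]
    [StarRing A] [StarModule ℂ A] [CompleteSpace A]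
(α : A → A)
    (hadd : ∀ x y : A, α (x + y) = α x + α y)
    (hsmul : ∀ (c : ℂ) (x : A), α (c • x) = c • α x)
    (hmul : ∀ x y : A, α (x * y) = α x * α y)
    (hstar : ∀ x : A, α (star x) = star (α x))
    (hinvol : ∀ x : A, α (α x) = x)
    (hfs : ∀ x : A, ‖α (star x) * x‖ = ‖x‖ ^ 2)
    (hcomm : ∀ x y : A, x * y = y * x)
(ε : A → A)
    (heinvol : ∀ x : A, ε (ε x) = x)
    (hemul_l : ∀ x y : A, ε (x * y) = ε x * y)
    (hecompat : ∀ x : A, ε (α x) = -α (ε x)) :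
    -- the Gel'fand transform of any element is a continuous 𝕂-valued function
    (∀ a : A, Continuous
      (fun w : {w : A → Matrix (Fin 2) (Fin 2) ℂ // IsKChar α w ∧ IsEven ε w} => w.1 a)) ∧
    (∀ (a : A) (w : {w : A → Matrix (Fin 2) (Fin 2) ℂ // IsKChar α w ∧ IsEven ε w}),
      Kmem (w.1 a)) ∧
    -- it is a unital ℂ-linear multiplicative map preserving the involutions
    (∀ (a b : A) (w : {w : A → Matrix (Fin 2) (Fin 2) ℂ // IsKChar α w ∧ IsEven ε w}),
      w.1 (a * b) = w.1 a * w.1 b ∧ w.1 (a + b) = w.1 a + w.1 b) ∧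
    (∀ (c : ℂ) (a : A) (w : {w : A → Matrix (Fin 2) (Fin 2) ℂ // IsKChar α w ∧ IsEven ε w}),
      w.1 (c • a) = c • w.1 a) ∧
    (∀ w : {w : A → Matrix (Fin 2) (Fin 2) ℂ // IsKChar α w ∧ IsEven ε w}, w.1 1 = 1) ∧
    (∀ (a : A) (w : {w : A → Matrix (Fin 2) (Fin 2) ℂ // IsKChar α w ∧ IsEven ε w}),
      w.1 (star a) = Kst (w.1 a)) ∧
    -- it is injective
    (∀ a b : A,
      (∀ w : {w : A → Matrix (Fin 2) (Fin 2) ℂ // IsKChar α w ∧ IsEven ε w}, w.1 a = w.1 b)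
        → a = b) ∧
    -- it is surjective onto the continuous 𝕂-valued functions
    (∀ f : {w : A → Matrix (Fin 2) (Fin 2) ℂ // IsKChar α w ∧ IsEven ε w}
        → Matrix (Fin 2) (Fin 2) ℂ,
      Continuous f → (∀ w, Kmem (f w)) →
        ∃ a : A, ∀ w, w.1 a = f w) ∧
    -- it is isometric for the sup-norm on `C(Ω(A, α, ε), 𝕂)`
    (∀ a : A,
      (⨆ w : {w : A → Matrix (Fin 2) (Fin 2) ℂ // IsKChar α w ∧ IsEven ε w}, ‖w.1 a‖)
        = ‖a‖) := by
  have hα : IsFundamentalSymmetry α := ⟨hadd, hsmul, hmul, hstar, hinvol, hfs⟩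
  have hε : IsMulOddInvolution α ε :=
    isMulOddInvolution_of_apply_mul hα.map_one heinvol hemul_l hecompat
  exact ⟨fun a => (continuous_apply a).comp continuous_subtype_val, fun a w => w.2.1.mem a,
    fun a b w => ⟨w.2.1.map_mul a b, w.2.1.map_add a b⟩, fun c a w => w.2.1.map_smul c a,
    fun w => w.2.1.map_one, fun a w => w.2.1.map_star a,
    fun _ _ => EvenKChar.eq_of_forall_apply_eq hα hcomm hε,
    EvenKChar.exists_forall_apply_eq hα hcomm hε, EvenKChar.iSup_norm_apply hα hcomm hε⟩

/-- **Spectral theorem.** For a unital commutative imprimitive Kreĭn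
C*-algebra `(A, α)` with compatible odd symmetry `ε`, the Gel'fand transform
`a ↦ (w ↦ w a)`, from `A` to the continuous `𝕂`-valued functions on the space
`Ω(A, α, ε)` of even characters (with the topology of pointwise convergence), is an
isometric *-isomorphism onto `C(Ω(A, α, ε), 𝕂)`. -/
theorem krein_gelfand_spectral_theorem {A : Type*} [NormedRing A] [NormedAlgebra ℂ A]
    [StarRing A] [StarModule ℂ A] [CompleteSpace A]
(α : A → A)
    (hadd : ∀ x y : A, α (x + y) = α x + α y)
    (hsmul : ∀ (c : ℂ) (x : A), α (c • x) = c • α x)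
    (hmul : ∀ x y : A, α (x * y) = α x * α y)
    (hstar : ∀ x : A, α (star x) = star (α x))
    (hinvol : ∀ x : A, α (α x) = x)
    (hfs : ∀ x : A, ‖α (star x) * x‖ = ‖x‖ ^ 2)
    (hcomm : ∀ x y : A, x * y = y * x)
    (himp : Imprimitive α)
(ε : A → A)
    (headd : ∀ x y : A, ε (x + y) = ε x + ε y)
    (hesmul : ∀ (c : ℂ) (x : A), ε (c • x) = c • ε x)
    (heinvol : ∀ x : A, ε (ε x) = x)
    (hestar : ∀ x : A, ε (star x) = -star (ε x))
    (hemul_l : ∀ x y : A, ε (x * y) = ε x * y)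
    (hemul_r : ∀ x y : A, ε (x * y) = x * ε y)
    (hecompat : ∀ x : A, ε (α x) = -α (ε x)) :
    -- the Gel'fand transform of any element is a continuous 𝕂-valued function
    (∀ a : A, Continuous
      (fun w : {w : A → Matrix (Fin 2) (Fin 2) ℂ // IsKChar α w ∧ IsEven ε w} => w.1 a)) ∧
    (∀ (a : A) (w : {w : A → Matrix (Fin 2) (Fin 2) ℂ // IsKChar α w ∧ IsEven ε w}),
      Kmem (w.1 a)) ∧
    -- it is a unital ℂ-linear multiplicative map preserving the involutions
    (∀ (a b : A) (w : {w : A → Matrix (Fin 2) (Fin 2) ℂ // IsKChar α w ∧ IsEven ε w}),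
      w.1 (a * b) = w.1 a * w.1 b ∧ w.1 (a + b) = w.1 a + w.1 b) ∧
    (∀ (c : ℂ) (a : A) (w : {w : A → Matrix (Fin 2) (Fin 2) ℂ // IsKChar α w ∧ IsEven ε w}),
      w.1 (c • a) = c • w.1 a) ∧
    (∀ w : {w : A → Matrix (Fin 2) (Fin 2) ℂ // IsKChar α w ∧ IsEven ε w}, w.1 1 = 1) ∧
    (∀ (a : A) (w : {w : A → Matrix (Fin 2) (Fin 2) ℂ // IsKChar α w ∧ IsEven ε w}),
      w.1 (star a) = Kst (w.1 a)) ∧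
    -- it is injective
    (∀ a b : A,
      (∀ w : {w : A → Matrix (Fin 2) (Fin 2) ℂ // IsKChar α w ∧ IsEven ε w}, w.1 a = w.1 b)
        → a = b) ∧
    -- it is surjective onto the continuous 𝕂-valued functions
    (∀ f : {w : A → Matrix (Fin 2) (Fin 2) ℂ // IsKChar α w ∧ IsEven ε w}
        → Matrix (Fin 2) (Fin 2) ℂ,
      Continuous f → (∀ w, Kmem (f w)) →
        ∃ a : A, ∀ w, w.1 a = f w) ∧
    -- it is isometric for the sup-norm on `C(Ω(A, α, ε), 𝕂)`
    (∀ a : A,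
      (⨆ w : {w : A → Matrix (Fin 2) (Fin 2) ℂ // IsKChar α w ∧ IsEven ε w}, ‖w.1 a‖)
        = ‖a‖) :=
  krein_gelfand_spectral_theorem_general α hadd hsmul hmul hstar hinvol hfs hcomm ε heinvol hemul_l
    hecompat
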